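/- arXiv:1404.4694 — 8 statements merged into one kernel-verified Lean document; each statement's English description precedes it below -/
import Mathlib

section
/- The function t ↦ η^N_t is differentiable on (−∞, T] and solves the Riccati equation (d/dt)η^N_t = 2(a+q)η^N_t + (1 − 1/N²)(η^N_t)² − (ε − q²) for every t ≤ T, together with the terminal condition η^N_T = c. -/
/-!
With `E(t) = exp ((δ⁺ - δ⁻)(T - t))`, `η` is a Möbius transformation of `E`, and `E' = -(δ⁺ - δ⁻) E`.
The quotient rule turns the Riccati equation into a polynomial identity in `E` which holds
because `δ±` are the roots of `x² + 2(a+q) x - r (ε - q²)`, i.e. `δ⁺ + δ⁻ = -2(a+q)` and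
`δ⁺ δ⁻ = -r (ε - q²)`. For `t ≤ T` we have `E ≥ 1`, and the denominator is
`(δ⁻ - c r)(E - 1) + (δ⁻ - δ⁺) < 0` since `δ⁻ ≤ 0 ≤ c r` and `δ⁻ < δ⁺`.
-/

/-- The explicit solution `η` of the scalar Riccati equation, as a function of the
parameters `a, q, ε, c`, the horizon `T`, the coefficient `r` (which equals
`1 - 1/N²` for the `N`-player game) and the time `t`. -/
noncomputable def etaAux (a q ε c T r t : ℝ) : ℝ :=
  let R := (a + q) ^ 2 + r * (ε - q ^ 2)
  let dp := -(a + q) + Real.sqrt R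
  let dm := -(a + q) - Real.sqrt R
  let e := Real.exp ((dp - dm) * (T - t))
  (-(ε - q ^ 2) * (e - 1) - c * (dp * e - dm)) / ((dm * e - dp) - c * r * (e - 1))

open Real

section Riccati

variable (k c T r dp dm : ℝ)

noncomputable def riccatiNum (t : ℝ) : ℝ :=
  -k * (exp ((dp - dm) * (T - t)) - 1) - c * (dp * exp ((dp - dm) * (T - t)) - dm)

noncomputable def riccatiDen (t : ℝ) : ℝ :=
  dm * exp ((dp - dm) * (T - t)) - dp - c * r * (exp ((dp - dm) * (T - t)) - 1)

noncomputable def riccatiSol (t : ℝ) : ℝ :=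
  riccatiNum k c T dp dm t / riccatiDen c T r dp dm t

theorem hasDerivAt_exp_mul_sub (l t : ℝ) :
    HasDerivAt (fun u => exp (l * (T - u))) (-l * exp (l * (T - t))) t := by
  have h := (((hasDerivAt_id t).const_sub T).const_mul l).exp
  simpa [mul_comm] using h

theorem hasDerivAt_riccatiSol {t : ℝ} (hprod : dp * dm = -(r * k))
    (hden : riccatiDen c T r dp dm t ≠ 0) :
    HasDerivAt (riccatiSol k c T r dp dm)
      (-(dp + dm) * riccatiSol k c T r dp dm t + r * riccatiSol k c T r dp dm t ^ 2 - k) t := by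
  set E := exp ((dp - dm) * (T - t))
  have hE := hasDerivAt_exp_mul_sub T (dp - dm) t
  have hNum : HasDerivAt (riccatiNum k c T dp dm)
      (-k * (-(dp - dm) * E) - c * (dp * (-(dp - dm) * E))) t :=
    ((hE.sub_const 1).const_mul (-k)).sub (((hE.const_mul dp).sub_const dm).const_mul c)
  have hDen : HasDerivAt (riccatiDen c T r dp dm)
      (dm * (-(dp - dm) * E) - c * r * (-(dp - dm) * E)) t :=
    ((hE.const_mul dm).sub_const dp).sub ((hE.sub_const 1).const_mul (c * r))
  refine (hNum.div hDen hden).congr_deriv ?_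
  unfold riccatiSol
  field_simp
  unfold riccatiNum riccatiDen
  linear_combination (E - 1) ^ 2 * (c ^ 2 * r - k - c * (dp + dm)) * hprod

theorem riccatiDen_neg {t : ℝ} (hlt : dm < dp) (hle : dm ≤ c * r) (ht : t ≤ T) :
    riccatiDen c T r dp dm t < 0 := by
  have hE : 1 ≤ exp ((dp - dm) * (T - t)) :=
    one_le_exp (mul_nonneg (sub_nonneg.mpr hlt.le) (sub_nonneg.mpr ht))
  unfold riccatiDen
  nlinarith [mul_nonneg (sub_nonneg.mpr hle) (sub_nonneg.mpr hE)]

theorem riccatiSol_self (hne : dp ≠ dm) : riccatiSol k c T r dp dm T = c := by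
  have hsub : dm - dp ≠ 0 := sub_ne_zero.mpr hne.symm
  simp only [riccatiSol, riccatiNum, riccatiDen, sub_self, mul_zero, exp_zero]
  field_simp
  ring

end Riccati

theorem etaAux_eq_riccatiSol (a q ε c T r : ℝ) :
    etaAux a q ε c T r = riccatiSol (ε - q ^ 2) c T r
      (-(a + q) + √((a + q) ^ 2 + r * (ε - q ^ 2))) (-(a + q) - √((a + q) ^ 2 + r * (ε - q ^ 2))) :=
  rfl

theorem statement_0_general (T a q ε c : ℝ) (N : ℕ) (hN : 1 ≤ N)
    (ha : 0 ≤ a) (hq : 0 ≤ q) (hc : 0 ≤ c)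
    (hR : 0 < (a + q) ^ 2 + (1 - 1 / (N : ℝ) ^ 2) * (ε - q ^ 2)) :
    DifferentiableOn ℝ (etaAux a q ε c T (1 - 1 / (N : ℝ) ^ 2)) (Set.Iic T) ∧
    (∀ t ≤ T, HasDerivAt (etaAux a q ε c T (1 - 1 / (N : ℝ) ^ 2))
      (2 * (a + q) * etaAux a q ε c T (1 - 1 / (N : ℝ) ^ 2) t
        + (1 - 1 / (N : ℝ) ^ 2) * (etaAux a q ε c T (1 - 1 / (N : ℝ) ^ 2) t) ^ 2
        - (ε - q ^ 2)) t) ∧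
    etaAux a q ε c T (1 - 1 / (N : ℝ) ^ 2) T = c := by
  set r := 1 - 1 / (N : ℝ) ^ 2
  have hr : 0 ≤ r := by
    have hN2 : (1 : ℝ) ≤ (N : ℝ) ^ 2 := one_le_pow₀ (by exact_mod_cast hN)
    simpa [r] using inv_le_one_of_one_le₀ hN2
  set s := √((a + q) ^ 2 + r * (ε - q ^ 2))
  have hs : 0 < s := sqrt_pos.mpr hR
  have hs2 : s ^ 2 = (a + q) ^ 2 + r * (ε - q ^ 2) := sq_sqrt hR.le
  rw [etaAux_eq_riccatiSol]
  have hderiv : ∀ t ≤ T, HasDerivAt (riccatiSol (ε - q ^ 2) c T r (-(a + q) + s) (-(a + q) - s))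
      (2 * (a + q) * riccatiSol (ε - q ^ 2) c T r (-(a + q) + s) (-(a + q) - s) t
        + r * riccatiSol (ε - q ^ 2) c T r (-(a + q) + s) (-(a + q) - s) t ^ 2 - (ε - q ^ 2)) t := by
    intro t ht
    have hden := riccatiDen_neg c T r (-(a + q) + s) (-(a + q) - s) (by linarith)
      (by linarith [mul_nonneg hc hr]) ht
    convert hasDerivAt_riccatiSol (ε - q ^ 2) c T r (-(a + q) + s) (-(a + q) - s)
      (by linear_combination -hs2) hden.ne using 2
    ring
  exact ⟨fun t ht => (hderiv t ht).differentiableAt.differentiableWithinAt, hderiv,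
    riccatiSol_self (ε - q ^ 2) c T r _ _ (by linarith)⟩

/-- The function `t ↦ η^N_t` is differentiable on `(−∞, T]` and solves the Riccati
equation `(d/dt) η^N_t = 2(a+q) η^N_t + (1 − 1/N²) (η^N_t)² − (ε − q²)` for every
`t ≤ T`, with terminal condition `η^N_T = c`. -/
theorem statement_0 (T a q ε c : ℝ) (N : ℕ) (hT : 0 < T) (hN : 1 ≤ N)
    (ha : 0 ≤ a) (hq : 0 ≤ q) (hc : 0 ≤ c) (hε : q ^ 2 ≤ ε)
    (hR : 0 < (a + q) ^ 2 + (1 - 1 / (N : ℝ) ^ 2) * (ε - q ^ 2)) :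
    DifferentiableOn ℝ (etaAux a q ε c T (1 - 1 / (N : ℝ) ^ 2)) (Set.Iic T) ∧
    (∀ t ≤ T, HasDerivAt (etaAux a q ε c T (1 - 1 / (N : ℝ) ^ 2))
      (2 * (a + q) * etaAux a q ε c T (1 - 1 / (N : ℝ) ^ 2) t
        + (1 - 1 / (N : ℝ) ^ 2) * (etaAux a q ε c T (1 - 1 / (N : ℝ) ^ 2) t) ^ 2
        - (ε - q ^ 2)) t) ∧
    etaAux a q ε c T (1 - 1 / (N : ℝ) ^ 2) T = c :=
  statement_0_general T a q ε c N hN ha hq hc hR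
end

section
/- For every t ≤ T the denominator D_N(t) = (δ⁻ e^{(δ⁺−δ⁻)(T−t)} − δ⁺) − c(1 − 1/N²)(e^{(δ⁺−δ⁻)(T−t)} − 1) is strictly negative; in particular the explicit formula for η^N_t is well defined for all t ≤ T. -/
/-- The denominator appearing in the explicit formula for `η^N_t`, as a function of
the parameters `a, q, ε, c`, the horizon `T`, the coefficient `r` (which equals
`1 - 1/N²` for the `N`-player game) and the time `t`. -/
noncomputable def denomAux (a q ε c T r t : ℝ) : ℝ :=
  let R := (a + q) ^ 2 + r * (ε - q ^ 2)
  let dp := -(a + q) + Real.sqrt R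
  let dm := -(a + q) - Real.sqrt R
  let e := Real.exp ((dp - dm) * (T - t))
  (dm * e - dp) - c * r * (e - 1)

/-! Since `e^{(δ⁺−δ⁻)(T−t)} ≥ 1` for `t ≤ T`, while `δ⁻ ≤ 0` and `c r ≥ 0`, the denominator is
at most `δ⁻ − δ⁺ = −2√R`, which is negative as soon as `R > 0`. -/

lemma one_sub_one_div_natCast_sq_nonneg (N : ℕ) : 0 ≤ 1 - 1 / (N : ℝ) ^ 2 := by
  rcases N.eq_zero_or_pos with rfl | hN
  · simp
  · have hN1 : (1 : ℝ) ≤ N := by exact_mod_cast hN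
    have : 1 / (N : ℝ) ^ 2 ≤ 1 := div_le_one_of_le₀ (one_le_pow₀ hN1) (by positivity)
    linarith

lemma denomAux_le_neg_two_mul_sqrt {a q ε c T r t : ℝ} (haq : 0 ≤ a + q) (hc : 0 ≤ c)
    (hr : 0 ≤ r) (ht : t ≤ T) :
    denomAux a q ε c T r t ≤ -2 * Real.sqrt ((a + q) ^ 2 + r * (ε - q ^ 2)) := by
  set s := Real.sqrt ((a + q) ^ 2 + r * (ε - q ^ 2))
  set e := Real.exp ((-(a + q) + s - (-(a + q) - s)) * (T - t))
  have hs : 0 ≤ s := Real.sqrt_nonneg _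
  have he : 1 ≤ e := Real.one_le_exp (by nlinarith)
  have hδ : (-(a + q) - s) * e ≤ -(a + q) - s := by nlinarith
  have hcr : 0 ≤ c * r * (e - 1) := by have := mul_nonneg hc hr; nlinarith
  change (-(a + q) - s) * e - (-(a + q) + s) - c * r * (e - 1) ≤ -2 * s
  linarith

theorem statement_1_general (T a q ε c : ℝ) (N : ℕ)
    (ha : 0 ≤ a) (hq : 0 ≤ q) (hc : 0 ≤ c)
    (hR : 0 < (a + q) ^ 2 + (1 - 1 / (N : ℝ) ^ 2) * (ε - q ^ 2)) :
    ∀ t ≤ T, denomAux a q ε c T (1 - 1 / (N : ℝ) ^ 2) t < 0 := by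
  intro t ht
  calc denomAux a q ε c T (1 - 1 / (N : ℝ) ^ 2) t
      ≤ -2 * Real.sqrt ((a + q) ^ 2 + (1 - 1 / (N : ℝ) ^ 2) * (ε - q ^ 2)) :=
        denomAux_le_neg_two_mul_sqrt (add_nonneg ha hq) hc
          (one_sub_one_div_natCast_sq_nonneg N) ht
    _ < 0 := by linarith [Real.sqrt_pos.mpr hR]

/-- For every `t ≤ T`, the denominator
`D_N(t) = (δ⁻ e^{(δ⁺−δ⁻)(T−t)} − δ⁺) − c (1 − 1/N²)(e^{(δ⁺−δ⁻)(T−t)} − 1)`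
is strictly negative, so the explicit formula for `η^N_t` is well defined for all
`t ≤ T`. -/
theorem statement_1 (T a q ε c : ℝ) (N : ℕ) (hT : 0 < T) (hN : 1 ≤ N)
    (ha : 0 ≤ a) (hq : 0 ≤ q) (hc : 0 ≤ c) (hε : q ^ 2 ≤ ε)
    (hR : 0 < (a + q) ^ 2 + (1 - 1 / (N : ℝ) ^ 2) * (ε - q ^ 2)) :
    ∀ t ≤ T, denomAux a q ε c T (1 - 1 / (N : ℝ) ^ 2) t < 0 :=
  statement_1_general T a q ε c N ha hq hc hR
end

section
/- Under the condition q² ≤ ε (and c ≥ 0), one has η^N_t ≥ 0 for every t ≤ T, and η^N_T = c. -/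
lemma riccati_quotient_nonneg {x s k c r e : ℝ} (hxs : |x| ≤ s) (hk : 0 ≤ k) (hc : 0 ≤ c)
    (hr : 0 ≤ r) (he : 1 ≤ e) :
    0 ≤ (-k * (e - 1) - c * ((-x + s) * e - (-x - s))) /
      (((-x - s) * e - (-x + s)) - c * r * (e - 1)) := by
  obtain ⟨hsx, hxs⟩ := abs_le.mp hxs
  have he1 : 0 ≤ e - 1 := sub_nonneg.mpr he
  have hx_le : x * (e - 1) ≤ s * (e - 1) := mul_le_mul_of_nonneg_right hxs he1
  have hx_ge : -s * (e - 1) ≤ x * (e - 1) := mul_le_mul_of_nonneg_right hsx he1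
  apply div_nonneg_of_nonpos
  · nlinarith [mul_nonneg hk he1]
  · nlinarith [mul_nonneg (mul_nonneg hc hr) he1]

theorem etaAux_nonneg {a q ε c T r t : ℝ} (hr : 0 ≤ r) (hc : 0 ≤ c) (hε : q ^ 2 ≤ ε)
    (ht : t ≤ T) : 0 ≤ etaAux a q ε c T r t := by
  have hk : 0 ≤ ε - q ^ 2 := sub_nonneg.mpr hε
  have hs : |a + q| ≤ √((a + q) ^ 2 + r * (ε - q ^ 2)) :=
    Real.abs_le_sqrt (le_add_of_nonneg_right (mul_nonneg hr hk))
  have hs0 := (abs_nonneg _).trans hs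
  refine riccati_quotient_nonneg hs hk hc hr (Real.one_le_exp (mul_nonneg ?_ ?_))
  · linarith
  · linarith

theorem etaAux_self {a q ε c T r : ℝ} (hR : 0 < (a + q) ^ 2 + r * (ε - q ^ 2)) :
    etaAux a q ε c T r T = c := by
  have hs := Real.sqrt_pos.mpr hR
  simp only [etaAux, sub_self, mul_zero, Real.exp_zero]
  rw [div_eq_iff (by linarith)]
  ring

theorem statement_2_general (T a q ε c : ℝ) (N : ℕ)
    (hc : 0 ≤ c) (hε : q ^ 2 ≤ ε)
    (hR : 0 < (a + q) ^ 2 + (1 - 1 / (N : ℝ) ^ 2) * (ε - q ^ 2)) :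
    (∀ t ≤ T, 0 ≤ etaAux a q ε c T (1 - 1 / (N : ℝ) ^ 2) t) ∧
    etaAux a q ε c T (1 - 1 / (N : ℝ) ^ 2) T = c :=
  ⟨fun _ ht => etaAux_nonneg (one_sub_one_div_natCast_sq_nonneg N) hc hε ht, etaAux_self hR⟩

/-- Under the condition `q² ≤ ε` (and `c ≥ 0`), one has `η^N_t ≥ 0` for every
`t ≤ T`, and `η^N_T = c`. -/
theorem statement_2 (T a q ε c : ℝ) (N : ℕ) (hT : 0 < T) (hN : 1 ≤ N)
    (ha : 0 ≤ a) (hq : 0 ≤ q) (hc : 0 ≤ c) (hε : q ^ 2 ≤ ε)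
    (hR : 0 < (a + q) ^ 2 + (1 - 1 / (N : ℝ) ^ 2) * (ε - q ^ 2)) :
    (∀ t ≤ T, 0 ≤ etaAux a q ε c T (1 - 1 / (N : ℝ) ^ 2) t) ∧
    etaAux a q ε c T (1 - 1 / (N : ℝ) ^ 2) T = c :=
  statement_2_general T a q ε c N hc hε hR
end

section
/- For each fixed (t,x,m) ∈ [0,T] × ℝ × ℝ, the value functions v^N(t,x,m) = (η^N_t/2)(x − m)² + χ^N_t converge, as N → ∞, to v^∞(t,x,m) = (η^∞_t/2)(x − m)² + χ^∞_t. -/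
/-- `χ^N_t = ½ σ² (1−ρ²) (1 − 1/N) ∫_t^T η^N_s ds` for the `N`-player game
(`rN = 1 - 1/N²`, `rN' = 1 - 1/N`), and `χ^∞_t` for the mean field limit
(`rN = rN' = 1`). -/
noncomputable def chiAux (a q ε c T σ ρ rN rN' t : ℝ) : ℝ :=
  1 / 2 * σ ^ 2 * (1 - ρ ^ 2) * rN' * ∫ s in t..T, etaAux a q ε c T rN s

/-!
For `r > 0` and `s ≤ T` the denominator of `η` is negative: `δ⁻ < 0`, `δ⁻ < δ⁺` and
`e^{(δ⁺ - δ⁻)(T - s)} ≥ 1` give `δ⁻ e - δ⁺ < 0`, and `c r (e - 1) ≥ 0`. Hence `(r, s) ↦ η` is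
continuous there, so `η^N_t → η^∞_t` as `1 - 1/N² → 1`; clamping `(r, s)` into that region makes it
globally continuous, so the parametric integral `∫_t^T η` is continuous in `r` as well, and the
prefactor `1 - 1/N` of `χ^N` tends to `1`.
-/

open Filter Topology Set

lemma add_mul_pos_of_add_pos {u d r : ℝ} (hu : 0 ≤ u) (hd : 0 ≤ d) (h : 0 < u + d)
    (hr : 0 < r) : 0 < u + r * d := by
  rcases le_total r 1 with hr1 | hr1 <;> nlinarith

lemma sub_sub_mul_sub_one_neg {dm dp e k : ℝ} (hdm : dm < 0) (hlt : dm < dp) (he : 1 ≤ e)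
    (hk : 0 ≤ k) : dm * e - dp - k * (e - 1) < 0 := by
  nlinarith

lemma tendsto_one_sub_one_div_pow_atTop {k : ℕ} (hk : k ≠ 0) :
    Tendsto (fun N : ℕ => 1 - 1 / (N : ℝ) ^ k) atTop (𝓝 1) := by
  have h := (tendsto_one_div_atTop_nhds_zero_nat (𝕜 := ℝ)).pow k
  simpa [zero_pow hk] using tendsto_const_nhds.sub h

section Riccati

variable {a q ε c T : ℝ}

lemma continuousAt_etaAux (haq : 0 ≤ a + q) (hc : 0 ≤ c) {r s : ℝ} (hr : 0 ≤ r)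
    (hR : 0 < (a + q) ^ 2 + r * (ε - q ^ 2)) (hs : s ≤ T) :
    ContinuousAt (fun p : ℝ × ℝ => etaAux a q ε c T p.1 p.2) (r, s) := by
  have hsqrt : 0 < √((a + q) ^ 2 + r * (ε - q ^ 2)) := Real.sqrt_pos.2 hR
  refine ContinuousAt.div (by fun_prop) (by fun_prop) (sub_sub_mul_sub_one_neg ?_ ?_ ?_
    (mul_nonneg hc hr)).ne
  · linarith
  · linarith
  · exact Real.one_le_exp (mul_nonneg (by linarith) (sub_nonneg.2 hs))

lemma continuousAt_etaAux_of_pos (haq : 0 ≤ a + q) (hc : 0 ≤ c) (hε : q ^ 2 ≤ ε)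
    (hR : 0 < (a + q) ^ 2 + (ε - q ^ 2)) {r s : ℝ} (hr : 0 < r) (hs : s ≤ T) :
    ContinuousAt (fun p : ℝ × ℝ => etaAux a q ε c T p.1 p.2) (r, s) :=
  continuousAt_etaAux haq hc hr.le
    (add_mul_pos_of_add_pos (sq_nonneg _) (sub_nonneg.2 hε) hR hr) hs

lemma tendsto_etaAux (haq : 0 ≤ a + q) (hc : 0 ≤ c) (hε : q ^ 2 ≤ ε)
    (hR : 0 < (a + q) ^ 2 + (ε - q ^ 2)) {α : Type*} {l : Filter α} {f : α → ℝ} {r s : ℝ}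
    (hf : Tendsto f l (𝓝 r)) (hr : 0 < r) (hs : s ≤ T) :
    Tendsto (fun i => etaAux a q ε c T (f i) s) l (𝓝 (etaAux a q ε c T r s)) :=
  (continuousAt_etaAux_of_pos haq hc hε hR hr hs).tendsto.comp
    (f := fun i => (f i, s)) (hf.prodMk_nhds tendsto_const_nhds)

lemma continuous_etaAux_clamp (haq : 0 ≤ a + q) (hc : 0 ≤ c) (hε : q ^ 2 ≤ ε)
    (hR : 0 < (a + q) ^ 2 + (ε - q ^ 2)) {r₀ : ℝ} (hr₀ : 0 < r₀) :
    Continuous fun p : ℝ × ℝ => etaAux a q ε c T (max p.1 r₀) (min p.2 T) :=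
  continuous_iff_continuousAt.2 fun p =>
    (continuousAt_etaAux_of_pos haq hc hε hR (lt_max_of_lt_right hr₀) (min_le_right _ _)).comp
      (f := fun p : ℝ × ℝ => (max p.1 r₀, min p.2 T)) (by fun_prop)

lemma tendsto_integral_etaAux (haq : 0 ≤ a + q) (hc : 0 ≤ c) (hε : q ^ 2 ≤ ε)
    (hR : 0 < (a + q) ^ 2 + (ε - q ^ 2)) {α : Type*} {l : Filter α} {f : α → ℝ} {r t : ℝ}
    (hf : Tendsto f l (𝓝 r)) (hr : 0 < r) (ht : t ≤ T) :
    Tendsto (fun i => ∫ s in t..T, etaAux a q ε c T (f i) s) l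
      (𝓝 (∫ s in t..T, etaAux a q ε c T r s)) := by
  set F : ℝ → ℝ := fun ρ => ∫ s in t..T, etaAux a q ε c T (max ρ (r / 2)) (min s T)
  have hF : Continuous F := intervalIntegral.continuous_parametric_intervalIntegral_of_continuous'
    (continuous_etaAux_clamp haq hc hε hR (half_pos hr)) t T
  have hF_eq {ρ : ℝ} (hρ : r / 2 ≤ ρ) : F ρ = ∫ s in t..T, etaAux a q ε c T ρ s := by
    refine intervalIntegral.integral_congr fun s hs => ?_
    rw [uIcc_of_le ht] at hs
    simp only [max_eq_left hρ, min_eq_left hs.2]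
  have hlim := (hF.tendsto r).comp hf
  rw [hF_eq (half_le_self hr.le)] at hlim
  refine hlim.congr' ?_
  filter_upwards [hf.eventually (eventually_ge_nhds (half_lt_self hr))] with i hi
  exact hF_eq hi

end Riccati

theorem statement_5_general (T a q ε c σ ρ t x m : ℝ)
    (ha : 0 ≤ a) (hq : 0 ≤ q) (hc : 0 ≤ c) (hε : q ^ 2 ≤ ε)
    (hR : 0 < (a + q) ^ 2 + (ε - q ^ 2))
    (ht : t ≤ T) :
    Filter.Tendsto
      (fun N : ℕ => etaAux a q ε c T (1 - 1 / (N : ℝ) ^ 2) t / 2 * (x - m) ^ 2 +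
        chiAux a q ε c T σ ρ (1 - 1 / (N : ℝ) ^ 2) (1 - 1 / (N : ℝ)) t)
      Filter.atTop
      (nhds (etaAux a q ε c T 1 t / 2 * (x - m) ^ 2 + chiAux a q ε c T σ ρ 1 1 t)) := by
  have haq : 0 ≤ a + q := add_nonneg ha hq
  have hr₂ := tendsto_one_sub_one_div_pow_atTop two_ne_zero
  have hr₁ : Tendsto (fun N : ℕ => 1 - 1 / (N : ℝ)) atTop (𝓝 1) := by
    simpa using tendsto_one_sub_one_div_pow_atTop one_ne_zero
  have hη := tendsto_etaAux haq hc hε hR hr₂ one_pos ht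
  have hI := tendsto_integral_etaAux haq hc hε hR hr₂ one_pos ht
  exact ((hη.div_const 2).mul_const _).add ((tendsto_const_nhds.mul hr₁).mul hI)

/-- For each fixed `(t,x,m) ∈ [0,T] × ℝ × ℝ`, the value functions
`v^N(t,x,m) = (η^N_t/2)(x − m)² + χ^N_t` converge, as `N → ∞`, to
`v^∞(t,x,m) = (η^∞_t/2)(x − m)² + χ^∞_t`. -/
theorem statement_5 (T a q ε c σ ρ t x m : ℝ) (hT : 0 < T)
    (ha : 0 ≤ a) (hq : 0 ≤ q) (hc : 0 ≤ c) (hε : q ^ 2 ≤ ε)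
    (hR : 0 < (a + q) ^ 2 + (ε - q ^ 2)) (hσ : 0 < σ) (hρ₁ : -1 ≤ ρ) (hρ₂ : ρ ≤ 1)
    (ht₀ : 0 ≤ t) (ht : t ≤ T) :
    Filter.Tendsto
      (fun N : ℕ => etaAux a q ε c T (1 - 1 / (N : ℝ) ^ 2) t / 2 * (x - m) ^ 2 +
        chiAux a q ε c T σ ρ (1 - 1 / (N : ℝ) ^ 2) (1 - 1 / (N : ℝ)) t)
      Filter.atTop
      (nhds (etaAux a q ε c T 1 t / 2 * (x - m) ^ 2 + chiAux a q ε c T σ ρ 1 1 t)) :=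
  statement_5_general T a q ε c σ ρ t x m ha hq hc hε hR ht
end

section
/- Suppose η, χ : ℝ → ℝ are differentiable on [0,T] and satisfy η'(t) = 2(a+q)η(t) + (1 − 1/N²)η(t)² − (ε − q²) and χ'(t) = −½σ²(1−ρ²)(1 − 1/N)η(t) for t ∈ [0,T], with η(T) = c and χ(T) = 0. For i ∈ {1,…,N} define V^i(t,x) = (η(t)/2)(x̄ − x^i)² + χ(t) for x = (x^1,…,x^N) ∈ ℝ^N, where x̄ = (x^1+⋯+x^N)/N. Then for every i and every (t,x) ∈ [0,T] × ℝ^N, ∂_t V^i + Σ_{j=1}^N [(a+q)(x̄ − x^j) − ∂_{x^j}V^j] ∂_{x^j}V^i + (σ²/2) Σ_{j=1}^N Σ_{k=1}^N (ρ² + δ_{j,k}(1−ρ²)) ∂²_{x^j x^k} V^i + ½(ε − q²)(x̄ − x^i)² + ½(∂_{x^i}V^i)² = 0, and V^i(T,x) = (c/2)(x̄ − x^i)². -/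
/-- The sample mean `x̄ = (x¹ + ⋯ + x^N)/N`. -/
noncomputable def xbar (N : ℕ) (x : Fin N → ℝ) : ℝ := (∑ j, x j) / N

/-- Partial derivative `∂_{x^j} F (x)` of a function `F : ℝ^N → ℝ`. -/
noncomputable def pderivX (N : ℕ) (j : Fin N) (F : (Fin N → ℝ) → ℝ)
    (x : Fin N → ℝ) : ℝ :=
  deriv (fun s => F (Function.update x j s)) (x j)

/-! Every `V^i` is a function of the single deviation `x̄ − x^i`, whose gradient is the
constant vector `g_{ij} = 1/N − δ_{ij}` (`gradMeanDev N i j`). Hence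
`∂_{x^j} V^i = η (x̄ − x^i) g_{ij}`, the Hessian of `V^i` is `η g_i g_iᵀ`, and the HJB equation
reduces to the identities `∑_j g_{ij} = 0`, `∑_j g_{ij}² = 1 − 1/N` and
`∑_j (x̄ − x^j) g_{ij} = −(x̄ − x^i)`. With these the `η`-terms are absorbed by the Riccati
equation for `η`, and the second-order terms by the equation for `χ`. -/

open Finset

noncomputable def gradMeanDev (N : ℕ) (i j : Fin N) : ℝ := 1 / N - if i = j then 1 else 0

@[simp]
lemma gradMeanDev_self (N : ℕ) (i : Fin N) : gradMeanDev N i i = 1 / N - 1 := by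
  simp [gradMeanDev]

lemma xbar_update {N : ℕ} (x : Fin N → ℝ) (j : Fin N) (s : ℝ) :
    xbar N (Function.update x j s) = xbar N x + (s - x j) / N := by
  rw [xbar, xbar, ← add_div, sum_update_of_mem (mem_univ j), ← add_sum_erase _ _ (mem_univ j),
    sdiff_singleton_eq_erase]
  ring

lemma hasDerivAt_meanDev_update {N : ℕ} (x : Fin N → ℝ) (i j : Fin N) :
    HasDerivAt (fun s => xbar N (Function.update x j s) - Function.update x j s i)
      (gradMeanDev N i j) (x j) := by
  simp only [xbar_update, Function.update_apply, gradMeanDev]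
  have hmean : HasDerivAt (fun s => xbar N x + (s - x j) / N) (1 / N) (x j) := by
    simpa using (((hasDerivAt_id (x j)).sub_const (x j)).div_const (N : ℝ)).const_add (xbar N x)
  split_ifs
  · exact hmean.sub (hasDerivAt_id' (x j))
  · simpa using hmean.sub_const (x i)

lemma pderivX_comp_meanDev {N : ℕ} {f : ℝ → ℝ} {f' : ℝ} (x : Fin N → ℝ) (i j : Fin N)
    (hf : HasDerivAt f f' (xbar N x - x i)) :
    pderivX N j (fun y => f (xbar N y - y i)) x = f' * gradMeanDev N i j := by
  have hf' : HasDerivAt f f'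
      (xbar N (Function.update x j (x j)) - Function.update x j (x j) i) := by
    rwa [Function.update_eq_self]
  exact (hf'.comp (x j) (hasDerivAt_meanDev_update x i j)).deriv

lemma pderivX_sq_meanDev {N : ℕ} (A B : ℝ) (x : Fin N → ℝ) (i j : Fin N) :
    pderivX N j (fun y => A / 2 * (xbar N y - y i) ^ 2 + B) x
      = A * (xbar N x - x i) * gradMeanDev N i j := by
  have hf : HasDerivAt (fun d => A / 2 * d ^ 2 + B) (A * (xbar N x - x i)) (xbar N x - x i) := by
    refine (((hasDerivAt_pow 2 _).const_mul (A / 2)).add_const B).congr_deriv ?_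
    norm_num
    ring
  exact pderivX_comp_meanDev x i j hf

lemma pderivX_mul_meanDev_mul {N : ℕ} (A c : ℝ) (x : Fin N → ℝ) (i j : Fin N) :
    pderivX N j (fun y => A * (xbar N y - y i) * c) x = A * c * gradMeanDev N i j := by
  have hf : HasDerivAt (fun d => A * d * c) (A * c) (xbar N x - x i) := by
    simpa using ((hasDerivAt_id' _).const_mul A).mul_const c
  exact pderivX_comp_meanDev x i j hf

lemma sum_xbar_sub (N : ℕ) (x : Fin N → ℝ) : ∑ j, (xbar N x - x j) = 0 := by
  rcases N.eq_zero_or_pos with rfl | hN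
  · simp
  rw [sum_sub_distrib, sum_const, card_univ, Fintype.card_fin, nsmul_eq_mul, xbar,
    mul_div_cancel₀ _ (by positivity), sub_self]

lemma sum_gradMeanDev {N : ℕ} (i : Fin N) : ∑ j, gradMeanDev N i j = 0 := by
  have : (N : ℝ) ≠ 0 := by have := i.pos; positivity
  simp [gradMeanDev, sum_sub_distrib, this]

lemma sum_gradMeanDev_sq {N : ℕ} (i : Fin N) : ∑ j, gradMeanDev N i j ^ 2 = 1 - 1 / N := by
  have : (N : ℝ) ≠ 0 := by have := i.pos; positivity
  have hsq : ∀ j, gradMeanDev N i j ^ 2 = 1 / N ^ 2 - if i = j then 2 / (N : ℝ) - 1 else 0 := by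
    intro j; unfold gradMeanDev; split_ifs <;> ring
  simp only [hsq, sum_sub_distrib, sum_ite_eq, mem_univ, if_true, sum_const, card_univ,
    Fintype.card_fin, nsmul_eq_mul]
  field_simp
  ring

lemma sum_xbar_sub_mul_gradMeanDev {N : ℕ} (x : Fin N → ℝ) (i : Fin N) :
    ∑ j, (xbar N x - x j) * gradMeanDev N i j = -(xbar N x - x i) := by
  simp only [gradMeanDev, mul_sub, mul_ite, mul_one, mul_zero]
  rw [sum_sub_distrib, ← sum_mul, sum_xbar_sub, sum_ite_eq]
  simp

lemma sum_sum_correlation_mul {ι : Type*} [Fintype ι] [DecidableEq ι] (r : ℝ) (g : ι → ℝ) :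
    ∑ j, ∑ k, (r + (if j = k then (1 : ℝ) else 0) * (1 - r)) * (g k * g j)
      = r * (∑ j, g j) ^ 2 + (1 - r) * ∑ j, g j ^ 2 := by
  simp only [add_mul, ite_mul, one_mul, zero_mul, sum_add_distrib, sum_ite_eq, mem_univ,
    if_true, ← mul_sum, ← sum_mul]
  simp only [sq]

lemma sum_sum_correlation_mul_gradMeanDev {N : ℕ} (r A : ℝ) (i : Fin N) :
    ∑ j, ∑ k, (r + (if j = k then (1 : ℝ) else 0) * (1 - r))
        * (A * gradMeanDev N i k * gradMeanDev N i j)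
      = A * (1 - r) * (1 - 1 / N) := by
  calc _ = A * ∑ j, ∑ k, (r + (if j = k then (1 : ℝ) else 0) * (1 - r))
        * (gradMeanDev N i k * gradMeanDev N i j) := by
        simp only [mul_sum]
        exact sum_congr rfl fun j _ => sum_congr rfl fun k _ => by ring
    _ = _ := by
        rw [sum_sum_correlation_mul, sum_gradMeanDev, sum_gradMeanDev_sq]
        ring

lemma sum_meanDev_feedback_mul_gradMeanDev {N : ℕ} (b A : ℝ) (x : Fin N → ℝ) (i : Fin N) :
    ∑ j, (b * (xbar N x - x j) - A * (xbar N x - x j) * gradMeanDev N j j)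
        * (A * (xbar N x - x i) * gradMeanDev N i j)
      = -(b - A * (1 / N - 1)) * A * (xbar N x - x i) ^ 2 := by
  calc _ = (b - A * (1 / N - 1)) * (A * (xbar N x - x i))
        * ∑ j, (xbar N x - x j) * gradMeanDev N i j := by
        rw [mul_sum]
        refine sum_congr rfl fun j _ => ?_
        rw [gradMeanDev_self]
        ring
    _ = _ := by rw [sum_xbar_sub_mul_gradMeanDev]; ring

theorem statement_6_general (T a q ε c σ ρ : ℝ) (N : ℕ)
    (η χ : ℝ → ℝ)
    (hη : ∀ t ∈ Set.Icc (0 : ℝ) T,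
      HasDerivAt η (2 * (a + q) * η t + (1 - 1 / (N : ℝ) ^ 2) * η t ^ 2 - (ε - q ^ 2)) t)
    (hχ : ∀ t ∈ Set.Icc (0 : ℝ) T,
      HasDerivAt χ (-(1 / 2) * σ ^ 2 * (1 - ρ ^ 2) * (1 - 1 / (N : ℝ)) * η t) t)
    (hηT : η T = c) (hχT : χ T = 0)
    (V : Fin N → ℝ → (Fin N → ℝ) → ℝ)
    (hV : ∀ i t x, V i t x = η t / 2 * (xbar N x - x i) ^ 2 + χ t) :
    ∀ (i : Fin N), ∀ t ∈ Set.Icc (0 : ℝ) T, ∀ x : Fin N → ℝ,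
      (deriv (fun s => V i s x) t
        + ∑ j, ((a + q) * (xbar N x - x j) - pderivX N j (V j t) x) * pderivX N j (V i t) x
        + σ ^ 2 / 2 * ∑ j, ∑ k,
            (ρ ^ 2 + (if j = k then (1 : ℝ) else 0) * (1 - ρ ^ 2)) *
              pderivX N j (fun y => pderivX N k (V i t) y) x
        + 1 / 2 * (ε - q ^ 2) * (xbar N x - x i) ^ 2
        + 1 / 2 * (pderivX N i (V i t) x) ^ 2 = 0)
      ∧ V i T x = c / 2 * (xbar N x - x i) ^ 2 := by
  intro i t ht x
  refine ⟨?_, by rw [hV, hηT, hχT, add_zero]⟩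
  have hN : (N : ℝ) ≠ 0 := by have := i.pos; positivity
  have hdt : deriv (fun s => V i s x) t
      = (2 * (a + q) * η t + (1 - 1 / (N : ℝ) ^ 2) * η t ^ 2 - (ε - q ^ 2)) / 2
          * (xbar N x - x i) ^ 2
        + -(1 / 2) * σ ^ 2 * (1 - ρ ^ 2) * (1 - 1 / (N : ℝ)) * η t := by
    simp only [hV]
    exact ((((hη t ht).div_const 2).mul_const _).add (hχ t ht)).deriv
  have hVt : ∀ j, V j t = fun y => η t / 2 * (xbar N y - y j) ^ 2 + χ t :=
    fun j => funext (hV j t)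
  rw [hdt]
  simp only [hVt, pderivX_sq_meanDev, pderivX_mul_meanDev_mul]
  rw [sum_meanDev_feedback_mul_gradMeanDev, sum_sum_correlation_mul_gradMeanDev, gradMeanDev_self]
  field_simp
  ring

/-- If `η, χ` solve the system
`η'(t) = 2(a+q) η(t) + (1 − 1/N²) η(t)² − (ε − q²)`,
`χ'(t) = −½ σ² (1−ρ²) (1 − 1/N) η(t)` on `[0,T]` with `η(T) = c`, `χ(T) = 0`,
then `V^i(t,x) = (η(t)/2)(x̄ − x^i)² + χ(t)` solves the system of `N` coupled HJB
equations of the `N`-player game, with terminal condition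
`V^i(T,x) = (c/2)(x̄ − x^i)²`. -/
theorem statement_6 (T a q ε c σ ρ : ℝ) (N : ℕ) (hT : 0 < T) (hN : 1 ≤ N)
    (ha : 0 ≤ a) (hq : 0 ≤ q) (hc : 0 ≤ c) (hσ : 0 < σ) (hρ₁ : -1 ≤ ρ) (hρ₂ : ρ ≤ 1)
    (η χ : ℝ → ℝ)
    (hη : ∀ t ∈ Set.Icc (0 : ℝ) T,
      HasDerivAt η (2 * (a + q) * η t + (1 - 1 / (N : ℝ) ^ 2) * η t ^ 2 - (ε - q ^ 2)) t)
    (hχ : ∀ t ∈ Set.Icc (0 : ℝ) T,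
      HasDerivAt χ (-(1 / 2) * σ ^ 2 * (1 - ρ ^ 2) * (1 - 1 / (N : ℝ)) * η t) t)
    (hηT : η T = c) (hχT : χ T = 0)
    (V : Fin N → ℝ → (Fin N → ℝ) → ℝ)
    (hV : ∀ i t x, V i t x = η t / 2 * (xbar N x - x i) ^ 2 + χ t) :
    ∀ (i : Fin N), ∀ t ∈ Set.Icc (0 : ℝ) T, ∀ x : Fin N → ℝ,
      (deriv (fun s => V i s x) t
        + ∑ j, ((a + q) * (xbar N x - x j) - pderivX N j (V j t) x) * pderivX N j (V i t) x
        + σ ^ 2 / 2 * ∑ j, ∑ k,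
            (ρ ^ 2 + (if j = k then (1 : ℝ) else 0) * (1 - ρ ^ 2)) *
              pderivX N j (fun y => pderivX N k (V i t) y) x
        + 1 / 2 * (ε - q ^ 2) * (xbar N x - x i) ^ 2
        + 1 / 2 * (pderivX N i (V i t) x) ^ 2 = 0)
      ∧ V i T x = c / 2 * (xbar N x - x i) ^ 2 :=
  statement_6_general T a q ε c σ ρ N η χ hη hχ hηT hχT V hV
end

section
/- The function t ↦ η^∞_t is differentiable on (−∞, T] and solves the Riccati equation (d/dt)η^∞_t = 2(a+q)η^∞_t + (η^∞_t)² − (ε − q²) for every t ≤ T, together with the terminal condition η^∞_T = c. -/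
/-!
Since `δ⁺ + δ⁻ = -2(a+q)` and `δ⁺ δ⁻ = -(ε - q²)`, the right-hand side of the Riccati equation
factors as `(η - δ⁺)(η - δ⁻)`, and `η^∞` is a Möbius transformation of `e = exp((δ⁺ - δ⁻)(T - t))`
with `η - δ⁺ = (δ⁺ - δ⁻)(δ⁺ - c) / D` and `η - δ⁻ = (δ⁺ - δ⁻)(δ⁻ - c) e / D` for its denominator
`D`, which is affine in `e`; differentiating the first identity gives the equation. For `t ≤ T`
we have `e ≥ 1`, and `δ⁻ ≤ 0 ≤ c` then keeps `D ≤ δ⁻ - δ⁺ < 0`.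
-/

open Real

noncomputable def riccatiMobius (α β c e : ℝ) : ℝ :=
  (α * β * (e - 1) - c * (α * e - β)) / (β * e - α - c * (e - 1))

lemma riccatiMobius_one {α β : ℝ} (c : ℝ) (h : α ≠ β) : riccatiMobius α β c 1 = c := by
  have hβα : β - α ≠ 0 := sub_ne_zero.mpr h.symm
  simp only [riccatiMobius, sub_self, mul_zero, mul_one, zero_sub, sub_zero]
  rw [div_eq_iff hβα]
  ring

lemma riccatiMobius_denom_neg {α β c e : ℝ} (hβα : β < α) (hβc : β ≤ c) (he : 1 ≤ e) :
    β * e - α - c * (e - 1) < 0 := by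
  nlinarith

lemma hasDerivAt_riccatiMobius_exp {α β c T t : ℝ}
    (hD : β * exp ((α - β) * (T - t)) - α - c * (exp ((α - β) * (T - t)) - 1) ≠ 0) :
    HasDerivAt (fun u => riccatiMobius α β c (exp ((α - β) * (T - u))))
      ((riccatiMobius α β c (exp ((α - β) * (T - t))) - α) *
        (riccatiMobius α β c (exp ((α - β) * (T - t))) - β)) t := by
  have he : HasDerivAt (fun u => exp ((α - β) * (T - u)))
      (exp ((α - β) * (T - t)) * -(α - β)) t := by
    simpa using (((hasDerivAt_id t).const_sub T).const_mul (α - β)).exp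
  have hN := ((he.sub_const 1).const_mul (α * β)).sub
    (((he.const_mul α).sub_const β).const_mul c)
  have hD' := (((he.const_mul β).sub_const α).sub ((he.sub_const 1).const_mul c))
  refine (hN.div hD' hD).congr_deriv ?_
  simp only [riccatiMobius, Pi.sub_apply]
  generalize exp ((α - β) * (T - t)) = e at hD ⊢
  field_simp
  ring

lemma etaAux_one_eq_riccatiMobius {a q ε c T : ℝ} (hR : 0 ≤ (a + q) ^ 2 + (ε - q ^ 2)) :
    etaAux a q ε c T 1 = fun t =>
      riccatiMobius (-(a + q) + √((a + q) ^ 2 + (ε - q ^ 2)))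
        (-(a + q) - √((a + q) ^ 2 + (ε - q ^ 2))) c
        (exp (((-(a + q) + √((a + q) ^ 2 + (ε - q ^ 2))) -
          (-(a + q) - √((a + q) ^ 2 + (ε - q ^ 2)))) * (T - t))) := by
  have hs := sq_sqrt hR
  have hprod : -(ε - q ^ 2) = (-(a + q) + √((a + q) ^ 2 + (ε - q ^ 2))) *
      (-(a + q) - √((a + q) ^ 2 + (ε - q ^ 2))) := by nlinarith
  funext t
  simp only [etaAux, riccatiMobius, one_mul, mul_one]
  rw [hprod]

theorem statement_8_general (T a q ε c : ℝ)
    (ha : 0 ≤ a) (hq : 0 ≤ q) (hc : 0 ≤ c)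
    (hR : 0 < (a + q) ^ 2 + (ε - q ^ 2)) :
    DifferentiableOn ℝ (etaAux a q ε c T 1) (Set.Iic T) ∧
    (∀ t ≤ T, HasDerivAt (etaAux a q ε c T 1)
      (2 * (a + q) * etaAux a q ε c T 1 t + (etaAux a q ε c T 1 t) ^ 2 - (ε - q ^ 2)) t) ∧
    etaAux a q ε c T 1 T = c := by
  have hη := etaAux_one_eq_riccatiMobius (ε := ε) (c := c) (T := T) hR.le
  set s := √((a + q) ^ 2 + (ε - q ^ 2))
  have hs : 0 < s := sqrt_pos.mpr hR
  have hs2 : s ^ 2 = (a + q) ^ 2 + (ε - q ^ 2) := sq_sqrt hR.le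
  have hderiv : ∀ t ≤ T, HasDerivAt (etaAux a q ε c T 1)
      (2 * (a + q) * etaAux a q ε c T 1 t + (etaAux a q ε c T 1 t) ^ 2 - (ε - q ^ 2)) t := by
    intro t ht
    have he : 1 ≤ exp ((-(a + q) + s - (-(a + q) - s)) * (T - t)) :=
      one_le_exp (mul_nonneg (by linarith) (by linarith))
    rw [hη]
    convert hasDerivAt_riccatiMobius_exp (c := c) (T := T) (t := t)
      (riccatiMobius_denom_neg (by linarith) (by linarith) he).ne using 1
    linear_combination hs2
  refine ⟨fun t ht => (hderiv t ht).differentiableAt.differentiableWithinAt, hderiv, ?_⟩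
  simpa [hη] using riccatiMobius_one c (by linarith : -(a + q) + s ≠ -(a + q) - s)

/-- The function `t ↦ η^∞_t` is differentiable on `(−∞, T]` and solves the Riccati
equation `(d/dt) η^∞_t = 2(a+q) η^∞_t + (η^∞_t)² − (ε − q²)` for every `t ≤ T`,
with terminal condition `η^∞_T = c`. -/
theorem statement_8 (T a q ε c : ℝ) (hT : 0 < T)
    (ha : 0 ≤ a) (hq : 0 ≤ q) (hc : 0 ≤ c) (hε : q ^ 2 ≤ ε)
    (hR : 0 < (a + q) ^ 2 + (ε - q ^ 2)) :
    DifferentiableOn ℝ (etaAux a q ε c T 1) (Set.Iic T) ∧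
    (∀ t ≤ T, HasDerivAt (etaAux a q ε c T 1)
      (2 * (a + q) * etaAux a q ε c T 1 t + (etaAux a q ε c T 1 t) ^ 2 - (ε - q ^ 2)) t) ∧
    etaAux a q ε c T 1 T = c :=
  statement_8_general T a q ε c ha hq hc hR
end

section
/- Suppose η, χ : ℝ → ℝ are differentiable on [0,T] and satisfy η'(t) = 2(a+q)η(t) + η(t)² − (ε − q²) and χ'(t) = −½σ²(1−ρ²)η(t) for t ∈ [0,T], with η(T) = c and χ(T) = 0. Then the function V(t,x,m) = (η(t)/2)(x − m)² + χ(t) satisfies, for all (t,x,m) ∈ [0,T] × ℝ × ℝ, the master equation ∂_t V + (a+q)(m − x)∂_x V + ½(ε − q²)(m − x)² − ½(∂_x V)² + (σ²/2)∂²_x V + (σ²ρ²/2)∂²_m V + σ²ρ² ∂²_{xm} V = 0, together with the terminal condition V(T,x,m) = (c/2)(m − x)². -/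
/-!
`V` is a quadratic in `x - m`, so `∂_x V = η (x - m) = -∂_m V`, `∂²_x V = ∂²_m V = η` and
`∂²_{xm} V = -η`. The diffusion terms therefore add up to `½ σ² (1 - ρ²) η`, which `χ'`
cancels, and the remaining multiples of `(x - m)²` cancel by the Riccati equation for `η`.
-/

section QuadraticDerivs

variable (k b : ℝ)

theorem deriv_half_mul_sub_sq_left (m : ℝ) :
    deriv (fun y => k / 2 * (y - m) ^ 2 + b) = fun y => k * (y - m) := by
  funext y
  have h : HasDerivAt (fun y => k / 2 * (y - m) ^ 2 + b) (k / 2 * (2 * (y - m) ^ 1 * 1)) y := by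
    simpa using (((hasDerivAt_id y).sub_const m).pow 2).const_mul (k / 2) |>.add_const b
  rw [h.deriv]
  ring

theorem deriv_half_mul_sub_sq_right (x : ℝ) :
    deriv (fun u => k / 2 * (x - u) ^ 2 + b) = fun u => k * (u - x) := by
  simp only [← neg_sub _ x, neg_sq]
  exact deriv_half_mul_sub_sq_left k b x

theorem deriv_mul_sub_const (m : ℝ) : deriv (fun y => k * (y - m)) = fun _ => k := by
  funext y
  simp

theorem deriv_mul_const_sub (m : ℝ) : deriv (fun y => k * (m - y)) = fun _ => -k := by
  funext y
  simp

end QuadraticDerivs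

theorem statement_9_general (T a q ε c σ ρ : ℝ)
    (η χ : ℝ → ℝ)
    (hη : ∀ t ∈ Set.Icc (0 : ℝ) T,
      HasDerivAt η (2 * (a + q) * η t + η t ^ 2 - (ε - q ^ 2)) t)
    (hχ : ∀ t ∈ Set.Icc (0 : ℝ) T,
      HasDerivAt χ (-(1 / 2) * σ ^ 2 * (1 - ρ ^ 2) * η t) t)
    (hηT : η T = c) (hχT : χ T = 0)
    (V : ℝ → ℝ → ℝ → ℝ)
    (hV : ∀ t x m, V t x m = η t / 2 * (x - m) ^ 2 + χ t) :
    ∀ t ∈ Set.Icc (0 : ℝ) T, ∀ x m : ℝ,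
      (deriv (fun s => V s x m) t
        + (a + q) * (m - x) * deriv (fun y => V t y m) x
        + 1 / 2 * (ε - q ^ 2) * (m - x) ^ 2
        - 1 / 2 * (deriv (fun y => V t y m) x) ^ 2
        + σ ^ 2 / 2 * deriv (fun y => deriv (fun y' => V t y' m) y) x
        + σ ^ 2 * ρ ^ 2 / 2 * deriv (fun u => deriv (fun u' => V t x u') u) m
        + σ ^ 2 * ρ ^ 2 * deriv (fun y => deriv (fun u => V t y u) m) x = 0)
      ∧ V T x m = c / 2 * (m - x) ^ 2 := by
  intro t ht x m
  obtain rfl : V = fun t x m => η t / 2 * (x - m) ^ 2 + χ t :=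
    funext fun t => funext fun x => funext fun m => hV t x m
  have h_time : HasDerivAt (fun s => η s / 2 * (x - m) ^ 2 + χ s)
      ((2 * (a + q) * η t + η t ^ 2 - (ε - q ^ 2)) / 2 * (x - m) ^ 2
        + -(1 / 2) * σ ^ 2 * (1 - ρ ^ 2) * η t) t :=
    (((hη t ht).div_const 2).mul_const ((x - m) ^ 2)).add (hχ t ht)
  refine ⟨?_, ?_⟩
  · simp only [h_time.deriv, deriv_half_mul_sub_sq_left, deriv_half_mul_sub_sq_right,
      deriv_mul_sub_const, deriv_mul_const_sub]
    ring
  · simp only [hηT, hχT, ← neg_sub m x, neg_sq]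
    ring

/-- If `η, χ` solve `η'(t) = 2(a+q) η(t) + η(t)² − (ε − q²)` and
`χ'(t) = −½ σ² (1−ρ²) η(t)` on `[0,T]` with `η(T) = c`, `χ(T) = 0`, then
`V(t,x,m) = (η(t)/2)(x − m)² + χ(t)` satisfies the master equation
`∂_t V + (a+q)(m − x) ∂_x V + ½(ε − q²)(m − x)² − ½(∂_x V)²
 + (σ²/2) ∂²_x V + (σ²ρ²/2) ∂²_m V + σ²ρ² ∂²_{xm} V = 0`
on `[0,T] × ℝ × ℝ`, with terminal condition `V(T,x,m) = (c/2)(m − x)²`. -/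
theorem statement_9 (T a q ε c σ ρ : ℝ) (hT : 0 < T)
    (ha : 0 ≤ a) (hq : 0 ≤ q) (hc : 0 ≤ c) (hσ : 0 < σ) (hρ₁ : -1 ≤ ρ) (hρ₂ : ρ ≤ 1)
    (η χ : ℝ → ℝ)
    (hη : ∀ t ∈ Set.Icc (0 : ℝ) T,
      HasDerivAt η (2 * (a + q) * η t + η t ^ 2 - (ε - q ^ 2)) t)
    (hχ : ∀ t ∈ Set.Icc (0 : ℝ) T,
      HasDerivAt χ (-(1 / 2) * σ ^ 2 * (1 - ρ ^ 2) * η t) t)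
    (hηT : η T = c) (hχT : χ T = 0)
    (V : ℝ → ℝ → ℝ → ℝ)
    (hV : ∀ t x m, V t x m = η t / 2 * (x - m) ^ 2 + χ t) :
    ∀ t ∈ Set.Icc (0 : ℝ) T, ∀ x m : ℝ,
      (deriv (fun s => V s x m) t
        + (a + q) * (m - x) * deriv (fun y => V t y m) x
        + 1 / 2 * (ε - q ^ 2) * (m - x) ^ 2
        - 1 / 2 * (deriv (fun y => V t y m) x) ^ 2
        + σ ^ 2 / 2 * deriv (fun y => deriv (fun y' => V t y' m) y) x
        + σ ^ 2 * ρ ^ 2 / 2 * deriv (fun u => deriv (fun u' => V t x u') u) m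
        + σ ^ 2 * ρ ^ 2 * deriv (fun y => deriv (fun u => V t y u) m) x = 0)
      ∧ V T x m = c / 2 * (m - x) ^ 2 :=
  statement_9_general T a q ε c σ ρ η χ hη hχ hηT hχT V hV
end

section
/- Let p > 1 and a, b, k, E, c, σ, γ, B > 0 be real numbers with a + b = p, γ = (B(p+bk)/E)^{1/(p−1)}, and suppose B satisfies ((p−1)/p)E^{−1/(p−1)}(B(p+bk))^{p/(p−1)} + c/k^b − γ B bk + (σ²/2) B p(p−1) = 0. Define V(x,q) = B x^{p+bk} q^{−bk} for x, q > 0. Then for all x ≥ q > 0, ((p−1)/p) E^{−1/(p−1)} (∂_x V(x,q))^{p/(p−1)} (q^{kb}/x^{kb})^{1/(p−1)} + c x^{a+(k+1)b}/(k^b q^{kb}) + γ q ∂_q V(x,q) + (σ²/2)[x² ∂²_x V(x,q) + q² ∂²_q V(x,q) + 2 x q ∂²_{xq} V(x,q)] = 0; that is, V is a time-independent classical solution of the parameterized master equation of the growth model on the region {x ≥ q}. -/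
/-- The candidate decoupling field of the growth model:
`V(x,q) = B x^{p+bk} q^{−bk}`. -/
noncomputable def Vgrow (p b k B x q : ℝ) : ℝ := B * x ^ (p + b * k) * q ^ (-(b * k))

/-- Under the conditions `a + b = p`, `γ = (B(p+bk)/E)^{1/(p−1)}` and the algebraic
equation for `B`, the function `V(x,q) = B x^{p+bk} q^{−bk}` is a time-independent
classical solution of the parameterized master equation of the growth model on
the region `{x ≥ q}`. -/
theorem statement_16 (p a b k E c σ γ B : ℝ) (hp : 1 < p) (ha : 0 < a) (hb : 0 < b)
    (hk : 0 < k) (hE : 0 < E) (hc : 0 < c) (hσ : 0 < σ) (hγ : 0 < γ) (hB : 0 < B)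
    (hab : a + b = p)
    (hγeq : γ = (B * (p + b * k) / E) ^ (1 / (p - 1)))
    (hBeq : (p - 1) / p * E ^ (-(1 / (p - 1))) * (B * (p + b * k)) ^ (p / (p - 1))
      + c / k ^ b - γ * B * (b * k) + σ ^ 2 / 2 * (B * (p * (p - 1))) = 0) :
    ∀ x q : ℝ, 0 < q → q ≤ x →
      (p - 1) / p * E ^ (-(1 / (p - 1))) *
          (deriv (fun y => Vgrow p b k B y q) x) ^ (p / (p - 1)) *
          (q ^ (k * b) / x ^ (k * b)) ^ (1 / (p - 1))
        + c * x ^ (a + (k + 1) * b) / (k ^ b * q ^ (k * b))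
        + γ * q * deriv (fun r => Vgrow p b k B x r) q
        + σ ^ 2 / 2 *
            (x ^ 2 * deriv (fun y => deriv (fun y' => Vgrow p b k B y' q) y) x
              + q ^ 2 * deriv (fun r => deriv (fun r' => Vgrow p b k B x r') r) q
              + 2 * x * q * deriv (fun y => deriv (fun r => Vgrow p b k B y r) q) x)
        = 0 := by
  intro x q hq hqx
  have hx : 0 < x := hq.trans_le hqx
  have hp1 : (0:ℝ) < p - 1 := by linarith
  have hp0 : (0:ℝ) < p := by linarith
  have hpk : (0:ℝ) < p + b * k := by positivity
  -- first derivative in x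
  have hdx : ∀ y : ℝ, 0 < y → deriv (fun y' => Vgrow p b k B y' q) y
      = B * ((p + b * k) * y ^ (p + b * k - 1)) * q ^ (-(b * k)) := by
    intro y hy
    exact (((Real.hasDerivAt_rpow_const (Or.inl hy.ne')).const_mul B).mul_const
      (q ^ (-(b * k)))).deriv
  -- first derivative in q
  have hdq : ∀ r : ℝ, 0 < r → deriv (fun r' => Vgrow p b k B x r') r
      = (B * x ^ (p + b * k)) * (-(b * k) * r ^ (-(b * k) - 1)) := by
    intro r hr
    exact ((Real.hasDerivAt_rpow_const (Or.inl hr.ne')).const_mul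
      (B * x ^ (p + b * k))).deriv
  -- second derivative in x
  have hdx2 : deriv (fun y => deriv (fun y' => Vgrow p b k B y' q) y) x
      = (B * (p + b * k)) * ((p + b * k - 1) * x ^ (p + b * k - 1 - 1)) * q ^ (-(b * k)) := by
    have hev : (fun y => deriv (fun y' => Vgrow p b k B y' q) y) =ᶠ[nhds x]
        fun y => (B * (p + b * k)) * y ^ (p + b * k - 1) * q ^ (-(b * k)) := by
      filter_upwards [Ioi_mem_nhds hx] with y hy
      rw [hdx y hy]; ring
    rw [hev.deriv_eq]
    exact (((Real.hasDerivAt_rpow_const (Or.inl hx.ne')).const_mul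
      (B * (p + b * k))).mul_const (q ^ (-(b * k)))).deriv
  -- second derivative in q
  have hdq2 : deriv (fun r => deriv (fun r' => Vgrow p b k B x r') r) q
      = (B * x ^ (p + b * k) * -(b * k)) * ((-(b * k) - 1) * q ^ (-(b * k) - 1 - 1)) := by
    have hev : (fun r => deriv (fun r' => Vgrow p b k B x r') r) =ᶠ[nhds q]
        fun r => (B * x ^ (p + b * k) * -(b * k)) * r ^ (-(b * k) - 1) := by
      filter_upwards [Ioi_mem_nhds hq] with r hr
      rw [hdq r hr]; ring
    rw [hev.deriv_eq]
    exact ((Real.hasDerivAt_rpow_const (Or.inl hq.ne')).const_mul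
      (B * x ^ (p + b * k) * -(b * k))).deriv
  -- mixed second derivative
  have hdmix : deriv (fun y => deriv (fun r => Vgrow p b k B y r) q) x
      = (B * (-(b * k) * q ^ (-(b * k) - 1))) * ((p + b * k) * x ^ (p + b * k - 1)) := by
    have hfun : (fun y => deriv (fun r => Vgrow p b k B y r) q)
        = fun y => (B * (-(b * k) * q ^ (-(b * k) - 1))) * y ^ (p + b * k) := by
      funext y
      have h1 : deriv (fun r => Vgrow p b k B y r) q
          = (B * y ^ (p + b * k)) * (-(b * k) * q ^ (-(b * k) - 1)) :=
        ((Real.hasDerivAt_rpow_const (Or.inl hq.ne')).const_mul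
          (B * y ^ (p + b * k))).deriv
      rw [h1]; ring
    rw [hfun]
    exact ((Real.hasDerivAt_rpow_const (Or.inl hx.ne')).const_mul
      (B * (-(b * k) * q ^ (-(b * k) - 1)))).deriv
  -- power normalizations
  have hx1 : x ^ (p + b * k - 1) = x ^ (p + b * k) / x := by
    rw [eq_div_iff hx.ne', ← Real.rpow_add_one hx.ne']; ring_nf
  have hx2 : x ^ (p + b * k - 1 - 1) = x ^ (p + b * k) / x / x := by
    rw [div_div, eq_div_iff (by positivity : x * x ≠ 0), ← mul_assoc,
      ← Real.rpow_add_one hx.ne', ← Real.rpow_add_one hx.ne']; ring_nf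
  have hq1 : q ^ (-(b * k) - 1) = q ^ (-(b * k)) / q := by
    rw [eq_div_iff hq.ne', ← Real.rpow_add_one hq.ne']; ring_nf
  have hq2 : q ^ (-(b * k) - 1 - 1) = q ^ (-(b * k)) / q / q := by
    rw [div_div, eq_div_iff (by positivity : q * q ≠ 0), ← mul_assoc,
      ← Real.rpow_add_one hq.ne', ← Real.rpow_add_one hq.ne']; ring_nf
  have hq3 : q ^ (k * b) = (q ^ (-(b * k)))⁻¹ := by
    rw [show k * b = -(-(b * k)) by ring, Real.rpow_neg hq.le]
  have hxa : x ^ (a + (k + 1) * b) = x ^ (p + b * k) := by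
    rw [show a + (k + 1) * b = p + b * k by rw [← hab]; ring]
  -- key power identity for the first term
  have hA : (0:ℝ) < B * (p + b * k) := by positivity
  have hT1 : (B * ((p + b * k) * x ^ (p + b * k - 1)) * q ^ (-(b * k))) ^ (p / (p - 1)) *
        (q ^ (k * b) / x ^ (k * b)) ^ (1 / (p - 1))
      = (B * (p + b * k)) ^ (p / (p - 1)) * (x ^ (p + b * k) * q ^ (-(b * k))) := by
    have e1 : (p + b * k - 1) * (p / (p - 1)) - k * b * (1 / (p - 1)) = p + b * k := by
      field_simp; ring
    have e2 : -(b * k) * (p / (p - 1)) + k * b * (1 / (p - 1)) = -(b * k) := by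
      field_simp; ring
    rw [show B * ((p + b * k) * x ^ (p + b * k - 1)) * q ^ (-(b * k))
        = (B * (p + b * k)) * x ^ (p + b * k - 1) * q ^ (-(b * k)) by ring]
    rw [Real.mul_rpow (by positivity) (by positivity),
      Real.mul_rpow hA.le (by positivity),
      Real.div_rpow (by positivity) (by positivity),
      ← Real.rpow_mul hx.le, ← Real.rpow_mul hq.le,
      ← Real.rpow_mul hq.le, ← Real.rpow_mul hx.le]
    calc (B * (p + b * k)) ^ (p / (p - 1)) * x ^ ((p + b * k - 1) * (p / (p - 1))) *
          q ^ (-(b * k) * (p / (p - 1))) *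
          (q ^ (k * b * (1 / (p - 1))) / x ^ (k * b * (1 / (p - 1))))
        = (B * (p + b * k)) ^ (p / (p - 1)) *
            ((x ^ ((p + b * k - 1) * (p / (p - 1))) / x ^ (k * b * (1 / (p - 1)))) *
             (q ^ (-(b * k) * (p / (p - 1))) * q ^ (k * b * (1 / (p - 1))))) := by ring
      _ = (B * (p + b * k)) ^ (p / (p - 1)) * (x ^ (p + b * k) * q ^ (-(b * k))) := by
          rw [← Real.rpow_sub hx, ← Real.rpow_add hq, e1, e2]
  have hQ : (0:ℝ) < q ^ (-(b * k)) := Real.rpow_pos_of_pos hq _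
  have hKB : (0:ℝ) < k ^ b := Real.rpow_pos_of_pos hk _
  rw [hdx x hx, hdq q hq, hdx2, hdq2, hdmix, hxa, mul_assoc, hT1, hq3, hx1, hx2,
    hq1, hq2]
  have hne1 : x ≠ 0 := hx.ne'
  have hne2 : q ≠ 0 := hq.ne'
  have hne3 : (k:ℝ) ^ b ≠ 0 := hKB.ne'
  have hne4 : q ^ (-(b * k)) ≠ 0 := hQ.ne'
  linear_combination (norm := (field_simp; ring))
    (x ^ (p + b * k) * q ^ (-(b * k))) * hBeq
end
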